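/- arXiv:2010.12129 — 5 statements merged into one kernel-verified Lean document; each statement's English description precedes it below -/
import Mathlib

section
/- There exists a constant γ > 0, depending only on the matrix D, such that for all right-hand sides r, r' ∈ ℝ^m for which the polyhedra P(r) and P(r') are both nonempty, and for every u ∈ P(r), the distance from u to P(r') satisfies dist(u, P(r')) ≤ γ‖r − r'‖. -/
/-!
Let `v` be the point of `P(r')` nearest to `u`. The variational inequality of the projection and
Farkas' lemma put `u - v` in the cone spanned by the normals of the constraints active at `v`, and
by Carathéodory's theorem for cones these normals may be taken linearly independent. Their
coefficients are then at most `K ‖u - v‖` for a constant `K` depending only on `D`, and pairing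
`u - v` with itself gives `‖u - v‖² ≤ K ‖u - v‖ ε`, where `ε = ‖r - r'‖` bounds the amount by which
`u` violates the constraints of `P(r')`. Carathéodory's theorem also shows that finitely generated
cones are closed, which Farkas' lemma needs.
-/

open Filter Metric Topology RealInnerProductSpace

section OrderedField

variable {𝕜 E ι : Type*} [Field 𝕜] [LinearOrder 𝕜] [IsStrictOrderedRing 𝕜]
  [AddCommGroup E] [Module 𝕜 E] {a : ι → E}

theorem mem_hull_image_iff {s : Finset ι} {x : E} :
    x ∈ PointedCone.hull 𝕜 (a '' s) ↔
      ∃ c : ι → 𝕜, (∀ j ∈ s, 0 ≤ c j) ∧ ∑ j ∈ s, c j • a j = x := by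
  classical
  constructor
  · intro hx
    induction hx using Submodule.span_induction with
    | mem x hx =>
      obtain ⟨i, hi, rfl⟩ := hx
      refine ⟨Pi.single i 1, fun j _ => ?_, by simp [Pi.single_apply, Finset.mem_coe.1 hi]⟩
      by_cases hj : j = i <;> simp [hj]
    | zero => exact ⟨0, fun _ _ => le_rfl, by simp⟩
    | add x y _ _ hx hy =>
      obtain ⟨c, hc, rfl⟩ := hx
      obtain ⟨d, hd, rfl⟩ := hy
      exact ⟨c + d, fun j hj => add_nonneg (hc j hj) (hd j hj),
        by simp [add_smul, Finset.sum_add_distrib]⟩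
    | smul r x _ hx =>
      obtain ⟨c, hc, rfl⟩ := hx
      exact ⟨fun j => r * c j, fun j hj => mul_nonneg r.2 (hc j hj),
        by simp [Finset.smul_sum, mul_smul]⟩
  · rintro ⟨c, hc, rfl⟩
    exact Submodule.sum_mem _ fun j hj =>
      PointedCone.smul_mem _ (hc j hj) (PointedCone.subset_hull ⟨j, hj, rfl⟩)

variable [DecidableEq ι]

theorem exists_nonneg_sum_erase_smul_eq {s : Finset ι} (hs : ¬LinearIndepOn 𝕜 a s) {c : ι → 𝕜}
    (hc : ∀ j ∈ s, 0 ≤ c j) :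
    ∃ i ∈ s, ∃ d : ι → 𝕜, (∀ j ∈ s.erase i, 0 ≤ d j) ∧
      ∑ j ∈ s.erase i, d j • a j = ∑ j ∈ s, c j • a j := by
  obtain ⟨g, hg, hpos⟩ :
      ∃ g : ι → 𝕜, ∑ j ∈ s, g j • a j = 0 ∧ (s.filter fun j => 0 < g j).Nonempty := by
    obtain ⟨g, hg, i, hi, hgi⟩ := not_linearIndepOn_finset_iff.1 hs
    rcases hgi.lt_or_gt with h | h
    · exact ⟨-g, by simp [neg_smul, hg], i, by simp [hi, h]⟩
    · exact ⟨g, hg, i, by simp [hi, h]⟩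
  -- Move along `-g` until a coefficient first vanishes; that index is dropped.
  obtain ⟨i, hi, hmin⟩ := Finset.exists_min_image _ (fun j => c j / g j) hpos
  rw [Finset.mem_filter] at hi
  set τ := c i / g i
  have hτ : 0 ≤ τ := div_nonneg (hc i hi.1) hi.2.le
  refine ⟨i, hi.1, fun j => c j - τ * g j, fun j hj => ?_, ?_⟩
  · have hj := Finset.mem_of_mem_erase hj
    rcases le_or_gt (g j) 0 with h | h
    · nlinarith [hc j hj]
    · have := hmin j (Finset.mem_filter.2 ⟨hj, h⟩)
      rw [le_div_iff₀ h] at this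
      linarith
  · have hi0 : c i - τ * g i = 0 := by simp [τ, div_mul_cancel₀ _ hi.2.ne']
    rw [Finset.sum_erase _ (by simp [hi0])]
    simp only [sub_smul, Finset.sum_sub_distrib, mul_smul, ← Finset.smul_sum, hg, smul_zero,
      sub_zero]

theorem exists_linearIndepOn_nonneg_sum_smul_eq (a : ι → E) (s : Finset ι) (c : ι → 𝕜)
    (hc : ∀ j ∈ s, 0 ≤ c j) :
    ∃ t ⊆ s, LinearIndepOn 𝕜 a t ∧ ∃ d : ι → 𝕜, (∀ j ∈ t, 0 ≤ d j) ∧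
      ∑ j ∈ t, d j • a j = ∑ j ∈ s, c j • a j := by
  induction s using Finset.strongInduction generalizing c with
  | H s ih =>
    by_cases hs : LinearIndepOn 𝕜 a s
    · exact ⟨s, subset_rfl, hs, c, hc, rfl⟩
    obtain ⟨i, hi, d, hd, hsum⟩ := exists_nonneg_sum_erase_smul_eq hs hc
    obtain ⟨t, hts, ht, e, he, hesum⟩ := ih _ (Finset.erase_ssubset hi) d hd
    exact ⟨t, hts.trans (Finset.erase_subset _ _), ht, e, he, hesum.trans hsum⟩

end OrderedField

section Normed

variable {E ι : Type*} [NormedAddCommGroup E] [NormedSpace ℝ E] {a : ι → E}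

theorem isClosed_hull_image (a : ι → E) (s : Finset ι) :
    IsClosed (PointedCone.hull ℝ (a '' s) : Set E) := by
  classical
  have hunion : (PointedCone.hull ℝ (a '' s) : Set E) = ⋃ t ∈ s.powerset,
      ⋃ (_ : LinearIndepOn ℝ a t),
        Fintype.linearCombination ℝ (fun j : ↥(t : Set ι) => a j) '' Set.Ici 0 := by
    ext x
    simp only [SetLike.mem_coe, Set.mem_iUnion, Set.mem_image, Finset.mem_powerset,
      Fintype.linearCombination_apply, exists_prop]
    constructor
    · intro hx
      obtain ⟨c, hc, rfl⟩ := mem_hull_image_iff.1 hx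
      obtain ⟨t, hts, ht, d, hd, hsum⟩ := exists_linearIndepOn_nonneg_sum_smul_eq a s c hc
      exact ⟨t, hts, ht, fun j => d j, fun j => hd j j.2,
        by rw [← hsum, ← Finset.sum_coe_sort t]; rfl⟩
    · rintro ⟨t, hts, -, ν, hν, rfl⟩
      exact Submodule.sum_mem _ fun j _ =>
        PointedCone.smul_mem _ (hν j) (PointedCone.subset_hull ⟨j, hts j.2, rfl⟩)
  rw [hunion]
  refine isClosed_biUnion_finset fun t _ => isClosed_iUnion_of_finite fun ht => ?_
  exact (LinearMap.isClosedEmbedding_of_injective (LinearMap.ker_eq_bot.2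
    ht.fintypeLinearCombination_injective)).isClosedMap _ isClosed_Ici

theorem LinearIndepOn.exists_sum_abs_le_mul_norm {t : Finset ι} (ht : LinearIndepOn ℝ a t) :
    ∃ K, ∀ c : ι → ℝ, ∑ j ∈ t, |c j| ≤ K * ‖∑ j ∈ t, c j • a j‖ := by
  set f := Fintype.linearCombination ℝ (fun j : ↥(t : Set ι) => a j)
  obtain ⟨K, -, hK⟩ := f.exists_antilipschitzWith
    (LinearMap.ker_eq_bot.2 ht.fintypeLinearCombination_injective)
  refine ⟨t.card * K, fun c => ?_⟩
  set ν : ↥(t : Set ι) → ℝ := fun j => c j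
  have hfν : f ν = ∑ j ∈ t, c j • a j := by
    rw [Fintype.linearCombination_apply, ← Finset.sum_coe_sort t]; rfl
  calc ∑ j ∈ t, |c j| = ∑ j, ‖ν j‖ := by rw [← Finset.sum_coe_sort t]; rfl
    _ ≤ Fintype.card ↥(t : Set ι) • ‖ν‖ := Pi.sum_norm_apply_le_norm ν
    _ ≤ t.card * (K * ‖f ν‖) := by
      simp only [nsmul_eq_mul, SetLike.coe_sort_coe, Fintype.card_coe]
      gcongr
      exact hK.le_mul_norm (map_zero f) ν
    _ = t.card * K * ‖∑ j ∈ t, c j • a j‖ := by rw [hfν, mul_assoc]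

theorem exists_sum_abs_le_mul_norm_of_linearIndepOn [Finite ι] (a : ι → E) :
    ∃ K, ∀ t : Finset ι, LinearIndepOn ℝ a t →
      ∀ c : ι → ℝ, ∑ j ∈ t, |c j| ≤ K * ‖∑ j ∈ t, c j • a j‖ := by
  have hK : ∀ t : Finset ι, ∃ K, LinearIndepOn ℝ a t →
      ∀ c : ι → ℝ, ∑ j ∈ t, |c j| ≤ K * ‖∑ j ∈ t, c j • a j‖ := fun t => by
    by_cases ht : LinearIndepOn ℝ a t
    · obtain ⟨K, hK⟩ := ht.exists_sum_abs_le_mul_norm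
      exact ⟨K, fun _ => hK⟩
    · exact ⟨0, fun h => absurd h ht⟩
  choose K hK using hK
  obtain ⟨M, hM⟩ := Finite.exists_le K
  exact ⟨M, fun t ht c => (hK t ht c).trans (by gcongr; exact hM t)⟩

end Normed

section InnerProduct

variable {E ι : Type*} [NormedAddCommGroup E] [InnerProductSpace ℝ E] {a : ι → E} {b : ι → ℝ}

theorem mem_hull_image_of_forall_inner_nonpos [CompleteSpace E] {s : Finset ι} {x : E}
    (h : ∀ z, (∀ j ∈ s, ⟪a j, z⟫ ≤ 0) → ⟪x, z⟫ ≤ 0) : x ∈ PointedCone.hull ℝ (a '' s) := by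
  by_contra hx
  let C : ProperCone ℝ E := ⟨PointedCone.hull ℝ (a '' s), isClosed_hull_image a s⟩
  obtain ⟨y, hC, hxy⟩ := C.hyperplane_separation' hx
  have := h (-y) fun j hj => by
    simpa [inner_neg_right] using hC _ (PointedCone.subset_hull ⟨j, hj, rfl⟩)
  rw [inner_neg_right] at this
  linarith

def polyhedron (a : ι → E) (b : ι → ℝ) : Set E := {v | ∀ j, ⟪a j, v⟫ ≤ b j}

theorem isClosed_polyhedron (a : ι → E) (b : ι → ℝ) : IsClosed (polyhedron a b) := by
  rw [polyhedron, Set.ofPred_forall]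
  exact isClosed_iInter fun j =>
    isClosed_le (continuous_const.inner continuous_id) continuous_const

theorem convex_polyhedron (a : ι → E) (b : ι → ℝ) : Convex ℝ (polyhedron a b) := by
  rw [polyhedron, Set.ofPred_forall]
  exact convex_iInter fun j => convex_halfSpace_le (innerₗ E (a j)).isLinear (b j)

theorem eventually_add_smul_mem_polyhedron [Finite ι] {v z : E} (hv : v ∈ polyhedron a b)
    (hz : ∀ j, ⟪a j, v⟫ = b j → ⟪a j, z⟫ ≤ 0) :
    ∀ᶠ δ in 𝓝[>] (0 : ℝ), v + δ • z ∈ polyhedron a b := by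
  refine eventually_all.2 fun j => ?_
  rcases (hv j).lt_or_eq with hlt | heq
  · have hcont : Continuous fun δ : ℝ => ⟪a j, v + δ • z⟫ := by fun_prop
    exact ((hcont.tendsto' 0 _ (by simp)).mono_left nhdsWithin_le_nhds).eventually_lt_const hlt
      |>.mono fun δ h => h.le
  · filter_upwards [self_mem_nhdsWithin] with δ (hδ : 0 < δ)
    rw [inner_add_right, real_inner_smul_right]
    nlinarith [hz j heq]

/-- The normal cone of a polyhedron at `v` is generated by the constraints active at `v`. -/
theorem mem_hull_image_of_forall_inner_sub_nonpos [CompleteSpace E] [Finite ι] {s : Finset ι}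
    {v x : E} (hv : v ∈ polyhedron a b) (hs : ∀ j ∉ s, ⟪a j, v⟫ < b j)
    (hx : ∀ w ∈ polyhedron a b, ⟪x, w - v⟫ ≤ 0) : x ∈ PointedCone.hull ℝ (a '' s) := by
  refine mem_hull_image_of_forall_inner_nonpos fun z hz => ?_
  have hz' : ∀ j, ⟪a j, v⟫ = b j → ⟪a j, z⟫ ≤ 0 := fun j hj =>
    hz j (by_contra fun h => (hs j h).ne hj)
  obtain ⟨δ, hδS, hδ⟩ :=
    ((eventually_add_smul_mem_polyhedron hv hz').and self_mem_nhdsWithin).exists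
  have := hx _ hδS
  rw [add_sub_cancel_left, real_inner_smul_right] at this
  exact nonpos_of_mul_nonpos_right this hδ

theorem exists_infDist_polyhedron_le [CompleteSpace E] [Finite ι] (a : ι → E) :
    ∃ γ > 0, ∀ (b : ι → ℝ) (u : E) (ε : ℝ), 0 ≤ ε → (polyhedron a b).Nonempty →
      (∀ j, ⟪a j, u⟫ ≤ b j + ε) → infDist u (polyhedron a b) ≤ γ * ε := by
  classical
  have := Fintype.ofFinite ι
  obtain ⟨K, hK⟩ := exists_sum_abs_le_mul_norm_of_linearIndepOn a
  refine ⟨max K 1, by positivity, fun b u ε hε hne hu => ?_⟩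
  obtain ⟨v, hv, hmin⟩ := exists_norm_eq_iInf_of_complete_convex hne
    (isClosed_polyhedron a b).isComplete (convex_polyhedron a b) u
  have hvar := (norm_eq_iInf_iff_real_inner_le_zero (convex_polyhedron a b) hv).1 hmin
  set act := Finset.univ.filter fun j => ⟪a j, v⟫ = b j
  have hcone : u - v ∈ PointedCone.hull ℝ (a '' act) :=
    mem_hull_image_of_forall_inner_sub_nonpos hv
      (fun j hj => (hv j).lt_of_ne (by simpa [act] using hj)) hvar
  obtain ⟨c, hc, hsum⟩ := mem_hull_image_iff.1 hcone
  obtain ⟨t, hta, ht, d, hd, hdsum⟩ := exists_linearIndepOn_nonneg_sum_smul_eq a act c hc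
  rw [hsum] at hdsum
  -- Pair `u - v = ∑ d j • a j` with `u - v`: `u` violates each active constraint by at most `ε`.
  have key : ‖u - v‖ ^ 2 ≤ max K 1 * ‖u - v‖ * ε := calc
    ‖u - v‖ ^ 2 = ∑ j ∈ t, d j * ⟪a j, u - v⟫ := by
      rw [← real_inner_self_eq_norm_sq]
      nth_rw 1 [← hdsum]
      simp only [sum_inner, real_inner_smul_left]
    _ ≤ ∑ j ∈ t, |d j| * ε := Finset.sum_le_sum fun j hj => by
      have hact : ⟪a j, v⟫ = b j := (Finset.mem_filter.1 (hta hj)).2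
      rw [abs_of_nonneg (hd j hj), inner_sub_right, hact]
      exact mul_le_mul_of_nonneg_left (by linarith [hu j]) (hd j hj)
    _ = (∑ j ∈ t, |d j|) * ε := by rw [Finset.sum_mul]
    _ ≤ max K 1 * ‖u - v‖ * ε := by
      gcongr
      rw [← hdsum]
      exact (hK t ht d).trans (by gcongr; exact le_max_left K 1)
  have hγε : 0 ≤ max K 1 * ε := mul_nonneg (zero_le_one.trans (le_max_right K 1)) hε
  calc infDist u (polyhedron a b) ≤ ‖u - v‖ :=
        (infDist_le_dist_of_mem hv).trans_eq (dist_eq_norm u v)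
    _ ≤ max K 1 * ε := by nlinarith [norm_nonneg (u - v)]

end InnerProduct

theorem inner_toLp_row_eq_mulVec {κ ι : Type*} [Fintype ι] (A : Matrix κ ι ℝ) (x : κ)
    (u : EuclideanSpace ℝ ι) : ⟪WithLp.toLp 2 (A x), u⟫ = A.mulVec u x := by
  rw [EuclideanSpace.inner_eq_star_dotProduct, Matrix.mulVec, dotProduct_comm]
  rfl

def stackedRows {κ ι : Type*} [DecidableEq ι] (D : Matrix κ ι ℝ) :
    κ ⊕ ι → EuclideanSpace ℝ ι :=
  fun x => WithLp.toLp 2 (Matrix.fromRows D (-1) x)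

theorem setOf_nonneg_mulVec_le_eq_polyhedron {κ ι : Type*} [Fintype ι] [DecidableEq ι]
    (D : Matrix κ ι ℝ) (r : EuclideanSpace ℝ κ) :
    {u : EuclideanSpace ℝ ι | (∀ i, 0 ≤ u i) ∧ ∀ j, D.mulVec u j ≤ r j} =
      polyhedron (stackedRows D) (Sum.elim r 0) := by
  ext u
  simp [polyhedron, stackedRows, inner_toLp_row_eq_mulVec, Matrix.fromRows_mulVec,
    Matrix.neg_mulVec, Sum.forall, and_comm]

/-- Hoffman-type Lipschitz continuity of the feasible-set mapping
`P(r) = {u : u ≥ 0, D u ≤ r}` of a linear program with fixed recourse matrix `D`: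
there is `γ > 0` (depending only on `D`) such that whenever `P r` and `P r'` are
nonempty and `u ∈ P r`, we have `dist(u, P r') ≤ γ ‖r - r'‖`. -/
theorem hoffman_feasible_set_lipschitz (m n : ℕ) (D : Matrix (Fin m) (Fin n) ℝ) :
    ∃ γ : ℝ, 0 < γ ∧
      ∀ r r' : EuclideanSpace ℝ (Fin m),
        ({u : EuclideanSpace ℝ (Fin n) | (∀ i, 0 ≤ u i) ∧ ∀ j, D.mulVec u j ≤ r j}).Nonempty →
        ({u : EuclideanSpace ℝ (Fin n) | (∀ i, 0 ≤ u i) ∧ ∀ j, D.mulVec u j ≤ r' j}).Nonempty →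
        ∀ u ∈ {u : EuclideanSpace ℝ (Fin n) | (∀ i, 0 ≤ u i) ∧ ∀ j, D.mulVec u j ≤ r j},
          Metric.infDist u
            {u : EuclideanSpace ℝ (Fin n) | (∀ i, 0 ≤ u i) ∧ ∀ j, D.mulVec u j ≤ r' j}
            ≤ γ * ‖r - r'‖ := by
  obtain ⟨γ, hγ, hP⟩ := exists_infDist_polyhedron_le (stackedRows D)
  refine ⟨γ, hγ, fun r r' _ hne' u hu => ?_⟩
  rw [setOf_nonneg_mulVec_le_eq_polyhedron] at hne' hu ⊢
  refine hP _ u _ (norm_nonneg _) hne' fun x => (hu x).trans ?_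
  rcases x with j | i
  · have : |r j - r' j| ≤ ‖r - r'‖ := PiLp.norm_apply_le (r - r') j
    simp only [Sum.elim_inl]
    linarith [le_abs_self (r j - r' j)]
  · simp [norm_nonneg]
end

section
/- There exists a constant χ > 0, depending only on D, C and M, such that for all x, x' ∈ ℝ^p for which E(x) and E(x') are both nonempty, and for every (u, η) ∈ E(x), the ℓ1-distance satisfies dist₁((u, η), E(x')) ≤ χ‖x − x'‖₁. -/
open Finset

set_option maxHeartbeats 1000000

theorem hoffman_l1 (d : ℕ) : ∀ (ι : Type) (_ : Fintype ι) (A : ι → Fin d → ℝ),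
    ∃ H : ℝ, 0 ≤ H ∧ ∀ (c : ι → ℝ) (w : Fin d → ℝ),
      (∃ v : Fin d → ℝ, ∀ j, ∑ i, A j i * v i ≤ c j) →
      ∃ v : Fin d → ℝ, (∀ j, ∑ i, A j i * v i ≤ c j) ∧
        ∑ i, |w i - v i| ≤ H * ∑ j, max (∑ i, A j i * w i - c j) 0 := by
  induction d with
  | zero =>
      intro ι fι A
      refine ⟨0, le_refl _, fun c w ⟨v, hv⟩ => ⟨w, fun j => ?_, by simp⟩⟩
      simpa using hv j
  | succ d IH =>
      intro ι fι A
      classical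
      set g : ι → ℝ := fun j => A j (Fin.last d) with hgdef
      set a : ι → Fin d → ℝ := fun j i => A j (Fin.castSucc i) with hadef
      have key : ∀ (j : ι) (v : Fin (d+1) → ℝ),
          ∑ i, A j i * v i = (∑ i, a j i * v (Fin.castSucc i)) + g j * v (Fin.last d) := by
        intro j v; rw [Fin.sum_univ_castSucc]
      -- projected system (Fourier–Motzkin elimination of the last variable)
      set A' : ι ⊕ ι × ι → Fin d → ℝ :=
        Sum.elim (fun z i => if g z = 0 then a z i else 0)
          (fun jk i => if 0 < g jk.1 ∧ g jk.2 < 0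
            then (-g jk.2) * a jk.1 i + g jk.1 * a jk.2 i else 0) with hA'def
      obtain ⟨H₀, hH₀0, ih⟩ := IH _ inferInstance A'
      -- constants
      set κ : ℝ := 1 + ∑ j, |g j|⁻¹ with hκdef
      set G : ℝ := 1 + ∑ j, |g j| with hGdef
      set α : ℝ := 1 + ∑ j, ∑ i, |a j i| with hαdef
      set mc : ℝ := (Fintype.card ι : ℝ) with hmcdef
      set C₁ : ℝ := 2 * G * mc + 1 with hC₁def
      have hκ1 : (1:ℝ) ≤ κ := le_add_of_nonneg_right (Finset.sum_nonneg fun _ _ => by positivity)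
      have hκ0 : (0:ℝ) ≤ κ := by linarith
      have hκj : ∀ j, |g j|⁻¹ ≤ κ := by
        intro j
        have := Finset.single_le_sum (f := fun j => |g j|⁻¹)
          (fun i _ => by positivity) (Finset.mem_univ j)
        linarith
      have hG1 : (1:ℝ) ≤ G := le_add_of_nonneg_right (Finset.sum_nonneg fun _ _ => by positivity)
      have hG0 : (0:ℝ) ≤ G := by linarith
      have hGj : ∀ j, |g j| ≤ G := by
        intro j
        have := Finset.single_le_sum (f := fun j => |g j|)
          (fun i _ => by positivity) (Finset.mem_univ j)
        linarith
      have hα0 : (0:ℝ) ≤ α :=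
        le_trans zero_le_one (le_add_of_nonneg_right (Finset.sum_nonneg fun _ _ =>
          Finset.sum_nonneg fun _ _ => by positivity))
      have hαji : ∀ j i, |a j i| ≤ α := by
        intro j i
        have h1 : ∑ i', |a j i'| ≤ ∑ j', ∑ i', |a j' i'| :=
          Finset.single_le_sum (f := fun j' => ∑ i', |a j' i'|)
            (fun _ _ => Finset.sum_nonneg fun _ _ => by positivity) (Finset.mem_univ j)
        have h2 : |a j i| ≤ ∑ i', |a j i'| :=
          Finset.single_le_sum (f := fun i' => |a j i'|) (fun _ _ => by positivity)
            (Finset.mem_univ i)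
        simp only [hαdef]; linarith
      have hmc0 : (0:ℝ) ≤ mc := Nat.cast_nonneg _
      have hC₁0 : (0:ℝ) ≤ C₁ := by positivity
      refine ⟨H₀ * C₁ + κ * (1 + mc * α * (H₀ * C₁)), by positivity, ?_⟩
      intro c w ⟨v₀, hv₀⟩
      set w' : Fin d → ℝ := fun i => w (Fin.castSucc i) with hw'def
      set wd : ℝ := w (Fin.last d) with hwddef
      set r : ι → ℝ := fun j => ∑ i, A j i * w i - c j with hrdef
      set R : ℝ := ∑ j, max (r j) 0 with hRdef
      have hR0 : 0 ≤ R := Finset.sum_nonneg fun _ _ => le_max_right _ _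
      have hrjR : ∀ j, max (r j) 0 ≤ R :=
        fun j => Finset.single_le_sum (f := fun j => max (r j) 0)
          (fun _ _ => le_max_right _ _) (Finset.mem_univ j)
      set c' : ι ⊕ ι × ι → ℝ :=
        Sum.elim (fun z => if g z = 0 then c z else 0)
          (fun jk => if 0 < g jk.1 ∧ g jk.2 < 0
            then (-g jk.2) * c jk.1 + g jk.1 * c jk.2 else 0) with hc'def
      have expand : ∀ (j k : ι) (t : Fin d → ℝ),
          ∑ i, ((-g k) * a j i + g j * a k i) * t i
            = (-g k) * (∑ i, a j i * t i) + g j * (∑ i, a k i * t i) := by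
        intro j k t
        rw [Finset.mul_sum, Finset.mul_sum, ← Finset.sum_add_distrib]
        exact Finset.sum_congr rfl fun i _ => by ring
      -- projected system is feasible
      have hproj_feas : ∃ v' : Fin d → ℝ, ∀ t, ∑ i, A' t i * v' i ≤ c' t := by
        refine ⟨fun i => v₀ (Fin.castSucc i), fun t => ?_⟩
        rcases t with z | ⟨j, k⟩
        · simp only [hA'def, hc'def, Sum.elim_inl]
          by_cases hz : g z = 0
          · have h1 := hv₀ z
            rw [key z v₀, hz] at h1
            simpa [hz] using h1
          · simp [hz]
        · simp only [hA'def, hc'def, Sum.elim_inr]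
          by_cases hjk : 0 < g j ∧ g k < 0
          · have h1 := hv₀ j; have h2 := hv₀ k
            rw [key j v₀] at h1; rw [key k v₀] at h2
            simp only [if_pos hjk]
            rw [expand]
            nlinarith [h1, h2, hjk.1, hjk.2]
          · simp [hjk]
      -- projected residual bound
      have hresid : ∑ t, max (∑ i, A' t i * w' i - c' t) 0 ≤ C₁ * R := by
        have hkeyw : ∀ j' : ι, ∑ i, a j' i * w' i = (∑ i, A j' i * w i) - g j' * wd := by
          intro j'; rw [key j' w]; simp [hw'def, hwddef]
        rw [Fintype.sum_sum_type]
        have hZ : ∑ z : ι, max (∑ i, A' (Sum.inl z) i * w' i - c' (Sum.inl z)) 0 ≤ R := by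
          apply le_trans (Finset.sum_le_sum (g := fun z => max (r z) 0) ?_) le_rfl
          intro z _
          simp only [hA'def, hc'def, Sum.elim_inl]
          by_cases hz : g z = 0
          · simp only [hz, if_true]
            rw [hkeyw z, hz]
            apply max_le _ (le_max_right _ _)
            refine le_trans (le_of_eq ?_) (le_max_left _ _)
            simp only [hrdef]; ring
          · simp [hz, le_max_right]
        have hPN : ∑ jk : ι × ι, max (∑ i, A' (Sum.inr jk) i * w' i - c' (Sum.inr jk)) 0
            ≤ 2 * G * mc * R := by
          have hrow : ∀ jk : ι × ι, max (∑ i, A' (Sum.inr jk) i * w' i - c' (Sum.inr jk)) 0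
              ≤ G * max (r jk.1) 0 + G * max (r jk.2) 0 := by
            rintro ⟨j, k⟩
            simp only [hA'def, hc'def, Sum.elim_inr]
            by_cases hjk : 0 < g j ∧ g k < 0
            · simp only [if_pos hjk]
              obtain ⟨hj, hk⟩ := hjk
              rw [expand, hkeyw j, hkeyw k]
              have e1 : (-g k) * ((∑ i, A j i * w i) - g j * wd)
                  + g j * ((∑ i, A k i * w i) - g k * wd)
                  - ((-g k) * c j + g j * c k) = (-g k) * r j + g j * r k := by
                simp only [hrdef]; ring
              rw [e1]
              have hgk : 0 < -g k := by linarith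
              have b1 : (-g k) * r j ≤ G * max (r j) 0 := by
                have h1 : (-g k) * r j ≤ (-g k) * max (r j) 0 :=
                  mul_le_mul_of_nonneg_left (le_max_left _ _) (le_of_lt hgk)
                have h2 : (-g k) * max (r j) 0 ≤ G * max (r j) 0 := by
                  apply mul_le_mul_of_nonneg_right _ (le_max_right _ _)
                  calc -g k ≤ |g k| := by rw [abs_of_neg hk]
                    _ ≤ G := hGj k
                linarith
              have b2 : g j * r k ≤ G * max (r k) 0 := by
                have h1 : g j * r k ≤ g j * max (r k) 0 :=
                  mul_le_mul_of_nonneg_left (le_max_left _ _) (le_of_lt hj)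
                have h2 : g j * max (r k) 0 ≤ G * max (r k) 0 := by
                  apply mul_le_mul_of_nonneg_right _ (le_max_right _ _)
                  calc g j ≤ |g j| := le_abs_self _
                    _ ≤ G := hGj j
                linarith
              apply max_le
              · linarith
              · positivity
            · refine le_trans ?_ (by positivity : (0:ℝ) ≤ G * max (r j) 0 + G * max (r k) 0)
              simp [hjk]
          calc ∑ jk : ι × ι, max (∑ i, A' (Sum.inr jk) i * w' i - c' (Sum.inr jk)) 0
              ≤ ∑ jk : ι × ι, (G * max (r jk.1) 0 + G * max (r jk.2) 0) :=
                Finset.sum_le_sum fun jk _ => hrow jk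
            _ = mc * (G * R) + mc * (G * R) := by
                rw [Fintype.sum_prod_type]
                have e : ∀ j : ι, ∑ k : ι, (G * max (r j) 0 + G * max (r k) 0)
                    = mc * (G * max (r j) 0) + G * R := by
                  intro j
                  rw [Finset.sum_add_distrib, Finset.sum_const, Finset.card_univ,
                    nsmul_eq_mul, ← Finset.mul_sum, ← hRdef, ← hmcdef]
                rw [Finset.sum_congr rfl (fun j _ => e j), Finset.sum_add_distrib,
                  ← Finset.mul_sum, ← Finset.mul_sum, ← hRdef, Finset.sum_const,
                  Finset.card_univ, nsmul_eq_mul, ← hmcdef]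
            _ ≤ 2 * G * mc * R := by nlinarith
        have := add_le_add hZ hPN
        nlinarith
      obtain ⟨v', hfeas', hdist'⟩ := ih c' w' hproj_feas
      set Δ : ℝ := ∑ i, |w' i - v' i| with hΔdef
      have hΔ0 : 0 ≤ Δ := Finset.sum_nonneg fun _ _ => abs_nonneg _
      have hΔle : Δ ≤ H₀ * (C₁ * R) := by
        refine le_trans hdist' ?_
        exact mul_le_mul_of_nonneg_left hresid hH₀0
      set γ : ι → ℝ := fun j => c j - ∑ i, a j i * v' i with hγdef
      set r'' : ι → ℝ := fun j => (∑ i, a j i * v' i) + g j * wd - c j with hr''def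
      set S : ℝ := ∑ j, max (r'' j) 0 with hSdef
      have hS0 : 0 ≤ S := Finset.sum_nonneg fun _ _ => le_max_right _ _
      have hjS : ∀ j, max (r'' j) 0 ≤ S :=
        fun j => Finset.single_le_sum (f := fun j => max (r'' j) 0)
          (fun _ _ => le_max_right _ _) (Finset.mem_univ j)
      have hγr : ∀ j, r'' j = g j * wd - γ j := by
        intro j; simp only [hr''def, hγdef]; ring
      have hkeyw : ∀ j' : ι, ∑ i, a j' i * w' i = (∑ i, A j' i * w i) - g j' * wd := by
        intro j'; rw [key j' w]; simp [hw'def, hwddef]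
      -- the residuals r'' are controlled by R and Δ
      have hS : S ≤ R + mc * (α * Δ) := by
        have hrow : ∀ j, max (r'' j) 0 ≤ max (r j) 0 + α * Δ := by
          intro j
          have hb : (∑ i, a j i * v' i) - ∑ i, a j i * w' i ≤ α * Δ := by
            rw [← Finset.sum_sub_distrib]
            calc ∑ i, (a j i * v' i - a j i * w' i) ≤ ∑ i, α * |w' i - v' i| := by
                  apply Finset.sum_le_sum; intro i _
                  have h1 : a j i * v' i - a j i * w' i = a j i * (v' i - w' i) := by ring
                  rw [h1]
                  calc a j i * (v' i - w' i) ≤ |a j i * (v' i - w' i)| := le_abs_self _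
                    _ = |a j i| * |v' i - w' i| := abs_mul _ _
                    _ ≤ α * |w' i - v' i| := by
                        rw [abs_sub_comm]
                        exact mul_le_mul_of_nonneg_right (hαji j i) (abs_nonneg _)
              _ = α * Δ := by rw [← Finset.mul_sum]
          have e : r'' j = r j + ((∑ i, a j i * v' i) - ∑ i, a j i * w' i) := by
            simp only [hr''def, hrdef]
            linear_combination hkeyw j
          apply max_le _ (by positivity)
          calc r'' j ≤ r j + α * Δ := by rw [e]; linarith
            _ ≤ max (r j) 0 + α * Δ := by linarith [le_max_left (r j) 0]
        calc S ≤ ∑ j, (max (r j) 0 + α * Δ) := Finset.sum_le_sum fun j _ => hrow j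
          _ = R + mc * (α * Δ) := by
              rw [Finset.sum_add_distrib, ← hRdef, Finset.sum_const, Finset.card_univ,
                nsmul_eq_mul, ← hmcdef]
      -- feasibility consequences of the projected system
      have hzero : ∀ z, g z = 0 → 0 ≤ γ z := by
        intro z hz
        have hf := hfeas' (Sum.inl z)
        simp only [hA'def, hc'def, Sum.elim_inl, hz, if_true] at hf
        simp only [hγdef]; linarith
      have hpair : ∀ j k, 0 < g j → g k < 0 → γ k / g k ≤ γ j / g j := by
        intro j k hj hk
        have hf := hfeas' (Sum.inr (j, k))
        simp only [hA'def, hc'def, Sum.elim_inr, if_pos (show 0 < g j ∧ g k < 0 from ⟨hj, hk⟩)]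
          at hf
        rw [expand] at hf
        rw [div_le_iff_of_neg hk, div_mul_eq_mul_div, div_le_iff₀ hj]
        simp only [hγdef]
        nlinarith [hf]
      -- enough to produce a suitable last coordinate s
      have final : ∀ s : ℝ, (∀ j, g j * s ≤ γ j) → |wd - s| ≤ κ * S →
          ∃ v : Fin (d+1) → ℝ, (∀ j, ∑ i, A j i * v i ≤ c j) ∧
            ∑ i, |w i - v i| ≤ (H₀ * C₁ + κ * (1 + mc * α * (H₀ * C₁))) * R := by
        intro s hs hdist
        refine ⟨Fin.snoc v' s, fun j => ?_, ?_⟩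
        · rw [key j]
          simp only [Fin.snoc_castSucc, Fin.snoc_last]
          have h1 := hs j
          simp only [hγdef] at h1
          linarith
        · rw [Fin.sum_univ_castSucc]
          simp only [Fin.snoc_castSucc, Fin.snoc_last]
          have e : ∑ i, |w (Fin.castSucc i) - v' i| = Δ := rfl
          rw [e]
          have m1 : κ * S ≤ κ * (R + mc * (α * Δ)) := mul_le_mul_of_nonneg_left hS hκ0
          have m2 : κ * (mc * (α * Δ)) ≤ κ * (mc * (α * (H₀ * (C₁ * R)))) := by
            apply mul_le_mul_of_nonneg_left _ hκ0
            apply mul_le_mul_of_nonneg_left _ hmc0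
            exact mul_le_mul_of_nonneg_left hΔle hα0
          nlinarith [hdist, hΔle, m1, m2]
      by_cases hU : ∃ j, 0 < g j ∧ γ j / g j < wd
      · -- the upper constraints push s strictly below wd
        have hPne : (Finset.univ.filter (fun j => 0 < g j)).Nonempty :=
          ⟨hU.choose, Finset.mem_filter.mpr ⟨Finset.mem_univ _, hU.choose_spec.1⟩⟩
        set s := (Finset.univ.filter (fun j => 0 < g j)).inf' hPne (fun j => γ j / g j)
          with hsdef
        apply final s
        · intro j
          rcases lt_trichotomy (g j) 0 with hj | hj | hj
          · have h1 : γ j / g j ≤ s := by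
              apply Finset.le_inf'
              intro b hb
              exact hpair b j (Finset.mem_filter.mp hb).2 hj
            have h2 := (div_le_iff_of_neg hj).mp h1
            nlinarith [h2]
          · rw [hj, zero_mul]; exact hzero j hj
          · have hmem : j ∈ Finset.univ.filter (fun j' => 0 < g j') :=
              Finset.mem_filter.mpr ⟨Finset.mem_univ _, hj⟩
            have h1 : s ≤ γ j / g j := Finset.inf'_le _ hmem
            have h2 := (le_div_iff₀ hj).mp h1
            nlinarith [h2]
        · obtain ⟨j₀, hj₀mem, hj₀⟩ := Finset.exists_mem_eq_inf' hPne (fun j => γ j / g j)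
          have hgj₀ : 0 < g j₀ := (Finset.mem_filter.mp hj₀mem).2
          obtain ⟨j₁, hj₁pos, hj₁lt⟩ := hU
          have hmem1 : j₁ ∈ Finset.univ.filter (fun j' => 0 < g j') :=
            Finset.mem_filter.mpr ⟨Finset.mem_univ _, hj₁pos⟩
          have hs_lt : s < wd := lt_of_le_of_lt (Finset.inf'_le _ hmem1) hj₁lt
          rw [abs_of_pos (by linarith : (0:ℝ) < wd - s)]
          have e1 : wd - s = r'' j₀ / g j₀ := by
            rw [hsdef, hj₀, hγr j₀]
            field_simp
          rw [e1]
          calc r'' j₀ / g j₀ ≤ max (r'' j₀) 0 / g j₀ := by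
                apply div_le_div_of_nonneg_right (le_max_left _ _) hgj₀.le
            _ = max (r'' j₀) 0 * (g j₀)⁻¹ := div_eq_mul_inv _ _
            _ ≤ max (r'' j₀) 0 * κ := by
                apply mul_le_mul_of_nonneg_left _ (le_max_right _ _)
                rw [show (g j₀)⁻¹ = |g j₀|⁻¹ by rw [abs_of_pos hgj₀]]
                exact hκj j₀
            _ ≤ κ * S := by nlinarith [hjS j₀, le_max_right (r'' j₀) 0, hκ0]
      · by_cases hL : ∃ k, g k < 0 ∧ wd < γ k / g k
        · -- the lower constraints push s strictly above wd
          have hNne : (Finset.univ.filter (fun j => g j < 0)).Nonempty :=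
            ⟨hL.choose, Finset.mem_filter.mpr ⟨Finset.mem_univ _, hL.choose_spec.1⟩⟩
          set s := (Finset.univ.filter (fun j => g j < 0)).sup' hNne (fun j => γ j / g j)
            with hsdef
          apply final s
          · intro j
            rcases lt_trichotomy (g j) 0 with hj | hj | hj
            · have hmem : j ∈ Finset.univ.filter (fun j' => g j' < 0) :=
                Finset.mem_filter.mpr ⟨Finset.mem_univ _, hj⟩
              have h1 : γ j / g j ≤ s := by
                rw [hsdef]; exact Finset.le_sup' (fun j' => γ j' / g j') hmem
              have h2 := (div_le_iff_of_neg hj).mp h1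
              nlinarith [h2]
            · rw [hj, zero_mul]; exact hzero j hj
            · have h1 : s ≤ γ j / g j := by
                apply Finset.sup'_le
                intro b hb
                exact hpair j b hj (Finset.mem_filter.mp hb).2
              have h2 := (le_div_iff₀ hj).mp h1
              nlinarith [h2]
          · obtain ⟨k₀, hk₀mem, hk₀⟩ := Finset.exists_mem_eq_sup' hNne (fun j => γ j / g j)
            have hgk₀ : g k₀ < 0 := (Finset.mem_filter.mp hk₀mem).2
            obtain ⟨k₁, hk₁neg, hk₁gt⟩ := hL
            have hmem1 : k₁ ∈ Finset.univ.filter (fun j' => g j' < 0) :=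
              Finset.mem_filter.mpr ⟨Finset.mem_univ _, hk₁neg⟩
            have hs_gt : wd < s := by
              rw [hsdef]
              exact lt_of_lt_of_le hk₁gt (Finset.le_sup' (fun j' => γ j' / g j') hmem1)
            rw [abs_of_neg (by linarith : wd - s < 0), neg_sub]
            have e1 : s - wd = r'' k₀ / (-g k₀) := by
              have hne : g k₀ ≠ 0 := ne_of_lt hgk₀
              rw [hsdef, hk₀, hγr k₀, eq_div_iff (neg_ne_zero.mpr hne)]
              field_simp
              ring
            rw [e1]
            have hpos : 0 < -g k₀ := by linarith
            calc r'' k₀ / (-g k₀) ≤ max (r'' k₀) 0 / (-g k₀) := by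
                  apply div_le_div_of_nonneg_right (le_max_left _ _) hpos.le
              _ = max (r'' k₀) 0 * (-g k₀)⁻¹ := div_eq_mul_inv _ _
              _ ≤ max (r'' k₀) 0 * κ := by
                  apply mul_le_mul_of_nonneg_left _ (le_max_right _ _)
                  rw [show (-g k₀)⁻¹ = |g k₀|⁻¹ by rw [abs_of_neg hgk₀]]
                  exact hκj k₀
              _ ≤ κ * S := by nlinarith [hjS k₀, le_max_right (r'' k₀) 0, hκ0]
        · -- wd itself is feasible
          push_neg at hU hL
          apply final wd
          · intro j
            rcases lt_trichotomy (g j) 0 with hj | hj | hj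
            · have h1 := hL j hj
              have h2 := (div_le_iff_of_neg hj).mp h1
              nlinarith [h2]
            · rw [hj, zero_mul]; exact hzero j hj
            · have h1 := hU j hj
              have h2 := (le_div_iff₀ hj).mp h1
              nlinarith [h2]
          · rw [sub_self, abs_zero]; positivity

/-- Variant of Hoffman's lemma (Lemma A.1): for the epigraph-form feasible set
`E(x) = {(u, η) : D u ≤ b - C x, ⟨ρ, u⟩ - η ≤ 0}` of the parameterized stage LP,
with `‖ρ‖_∞ ≤ M`, there is `χ > 0` (depending only on `D`, `C`, `M`) such that
whenever `E x` and `E x'` are nonempty and `(u, η) ∈ E x`, the ℓ1-distance from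
`(u, η)` to `E x'` is at most `χ ‖x - x'‖₁`. -/
theorem hoffman_variant_epigraph (m n p : ℕ)
    (D : Matrix (Fin m) (Fin n) ℝ) (C : Matrix (Fin m) (Fin p) ℝ)
    (b : Fin m → ℝ) (M : ℝ) (hM : 0 < M) (ρ : Fin n → ℝ) (hρ : ∀ i, |ρ i| ≤ M) :
    ∃ χ : ℝ, 0 < χ ∧
      ∀ x x' : Fin p → ℝ,
        ({q : (Fin n → ℝ) × ℝ | (∀ j, D.mulVec q.1 j ≤ b j - C.mulVec x j) ∧
            (∑ i, ρ i * q.1 i) - q.2 ≤ 0}).Nonempty →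
        ({q : (Fin n → ℝ) × ℝ | (∀ j, D.mulVec q.1 j ≤ b j - C.mulVec x' j) ∧
            (∑ i, ρ i * q.1 i) - q.2 ≤ 0}).Nonempty →
        ∀ u : Fin n → ℝ, ∀ η : ℝ,
          ((∀ j, D.mulVec u j ≤ b j - C.mulVec x j) ∧ (∑ i, ρ i * u i) - η ≤ 0) →
          sInf ((fun q : (Fin n → ℝ) × ℝ => (∑ i, |u i - q.1 i|) + |η - q.2|) ''
              {q : (Fin n → ℝ) × ℝ | (∀ j, D.mulVec q.1 j ≤ b j - C.mulVec x' j) ∧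
                (∑ i, ρ i * q.1 i) - q.2 ≤ 0})
            ≤ χ * ∑ j, |x j - x' j| := by
  classical
  set A : Fin m ⊕ Unit → Fin (n+1) → ℝ :=
    Sum.elim (fun j => Fin.snoc (fun i => D j i) 0) (fun _ => Fin.snoc ρ (-1)) with hAdef
  obtain ⟨H, hH0, hH⟩ := hoffman_l1 (n+1) (Fin m ⊕ Unit) inferInstance A
  set K : ℝ := 1 + ∑ j, ∑ k, |C j k| with hKdef
  have hK0 : (0:ℝ) ≤ K :=
    le_trans zero_le_one (le_add_of_nonneg_right (Finset.sum_nonneg fun _ _ =>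
      Finset.sum_nonneg fun _ _ => by positivity))
  refine ⟨H * K + 1, by positivity, ?_⟩
  intro x x' _hEx hEx' u η ⟨hu, hη⟩
  set T : ℝ := ∑ j, |x j - x' j| with hTdef
  have hT0 : 0 ≤ T := Finset.sum_nonneg fun _ _ => abs_nonneg _
  have hTk : ∀ k, |x k - x' k| ≤ T :=
    fun k => Finset.single_le_sum (f := fun k => |x k - x' k|)
      (fun _ _ => abs_nonneg _) (Finset.mem_univ k)
  set c : Fin m ⊕ Unit → ℝ := Sum.elim (fun j => b j - C.mulVec x' j) (fun _ => 0) with hcdef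
  -- row sums of the stacked system on a snoc vector
  have rowD : ∀ (y : Fin n → ℝ) (t : ℝ) (j : Fin m),
      ∑ i, A (Sum.inl j) i * (Fin.snoc y t : Fin (n+1) → ℝ) i = D.mulVec y j := by
    intro y t j
    rw [Fin.sum_univ_castSucc]
    simp [hAdef, Fin.snoc_castSucc, Fin.snoc_last, Matrix.mulVec, dotProduct]
  have rowR : ∀ (y : Fin n → ℝ) (t : ℝ),
      ∑ i, A (Sum.inr ()) i * (Fin.snoc y t : Fin (n+1) → ℝ) i = (∑ i, ρ i * y i) - t := by
    intro y t
    rw [Fin.sum_univ_castSucc]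
    simp [hAdef, Fin.snoc_castSucc, Fin.snoc_last]
    ring
  -- feasibility of the stacked system from E(x') nonempty
  obtain ⟨q₀, hq₀⟩ := hEx'
  have hfeas : ∃ v : Fin (n+1) → ℝ, ∀ t, ∑ i, A t i * v i ≤ c t := by
    refine ⟨Fin.snoc q₀.1 q₀.2, fun t => ?_⟩
    rcases t with j | ⟨⟩
    · rw [rowD]; exact hq₀.1 j
    · rw [rowR]; exact hq₀.2
  obtain ⟨v, hvfeas, hvdist⟩ := hH c (Fin.snoc u η) hfeas
  -- residual bound
  have hres : ∑ t, max (∑ i, A t i * (Fin.snoc u η : Fin (n+1) → ℝ) i - c t) 0 ≤ K * T := by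
    rw [Fintype.sum_sum_type]
    have h2 : ∑ t : Unit, max (∑ i, A (Sum.inr t) i * (Fin.snoc u η : Fin (n+1) → ℝ) i
        - c (Sum.inr t)) 0 = 0 := by
      simp only [Finset.univ_unique, Finset.sum_singleton]
      have : (default : Unit) = () := rfl
      rw [this, rowR u η]
      simp only [hcdef, Sum.elim_inr, sub_zero]
      exact max_eq_right hη
    have h1 : ∑ j : Fin m, max (∑ i, A (Sum.inl j) i * (Fin.snoc u η : Fin (n+1) → ℝ) i
        - c (Sum.inl j)) 0 ≤ K * T := by
      have hrow : ∀ j : Fin m, max (∑ i, A (Sum.inl j) i * (Fin.snoc u η : Fin (n+1) → ℝ) i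
          - c (Sum.inl j)) 0 ≤ ∑ k, |C j k| * T := by
        intro j
        rw [rowD u η j]
        simp only [hcdef, Sum.elim_inl]
        apply max_le _ (Finset.sum_nonneg fun k _ => by positivity)
        have h3 : D.mulVec u j - (b j - C.mulVec x' j) ≤ C.mulVec x' j - C.mulVec x j := by
          have := hu j; linarith
        have h4 : C.mulVec x' j - C.mulVec x j = ∑ k, C j k * (x' k - x k) := by
          simp only [Matrix.mulVec, dotProduct]
          rw [← Finset.sum_sub_distrib]
          exact Finset.sum_congr rfl fun k _ => by ring
        have h5 : ∑ k, C j k * (x' k - x k) ≤ ∑ k, |C j k| * T := by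
          apply Finset.sum_le_sum
          intro k _
          calc C j k * (x' k - x k) ≤ |C j k * (x' k - x k)| := le_abs_self _
            _ = |C j k| * |x' k - x k| := abs_mul _ _
            _ ≤ |C j k| * T := by
                rw [abs_sub_comm]
                exact mul_le_mul_of_nonneg_left (hTk k) (abs_nonneg _)
        linarith
      calc ∑ j : Fin m, max (∑ i, A (Sum.inl j) i * (Fin.snoc u η : Fin (n+1) → ℝ) i
            - c (Sum.inl j)) 0 ≤ ∑ j, ∑ k, |C j k| * T :=
            Finset.sum_le_sum fun j _ => hrow j
        _ = (∑ j, ∑ k, |C j k|) * T := by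
            rw [Finset.sum_mul]
            exact Finset.sum_congr rfl fun j _ => by rw [Finset.sum_mul]
        _ ≤ K * T := by
            apply mul_le_mul_of_nonneg_right _ hT0
            simp only [hKdef]; linarith
    linarith
  -- the feasible point gives the bound on the infimum
  set q' : (Fin n → ℝ) × ℝ := (Fin.init v, v (Fin.last n)) with hq'def
  have hsnoc : (Fin.snoc q'.1 q'.2 : Fin (n+1) → ℝ) = v := by
    simp only [hq'def]
    exact Fin.snoc_init_self v
  have hq'mem : q' ∈ {q : (Fin n → ℝ) × ℝ | (∀ j, D.mulVec q.1 j ≤ b j - C.mulVec x' j) ∧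
      (∑ i, ρ i * q.1 i) - q.2 ≤ 0} := by
    constructor
    · intro j
      have := hvfeas (Sum.inl j)
      rw [← hsnoc, rowD] at this
      simpa [hcdef] using this
    · have := hvfeas (Sum.inr ())
      rw [← hsnoc, rowR] at this
      simpa [hcdef] using this
  have hval : (∑ i, |u i - q'.1 i|) + |η - q'.2|
      = ∑ i : Fin (n+1), |(Fin.snoc u η : Fin (n+1) → ℝ) i - v i| := by
    rw [Fin.sum_univ_castSucc]
    simp only [Fin.snoc_castSucc, Fin.snoc_last, hq'def, Fin.init]
  have hbdd : BddBelow ((fun q : (Fin n → ℝ) × ℝ => (∑ i, |u i - q.1 i|) + |η - q.2|) ''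
      {q : (Fin n → ℝ) × ℝ | (∀ j, D.mulVec q.1 j ≤ b j - C.mulVec x' j) ∧
        (∑ i, ρ i * q.1 i) - q.2 ≤ 0}) := by
    refine ⟨0, fun y hy => ?_⟩
    obtain ⟨q, _, rfl⟩ := hy
    positivity
  have hmem' : (∑ i, |u i - q'.1 i|) + |η - q'.2| ∈
      ((fun q : (Fin n → ℝ) × ℝ => (∑ i, |u i - q.1 i|) + |η - q.2|) ''
      {q : (Fin n → ℝ) × ℝ | (∀ j, D.mulVec q.1 j ≤ b j - C.mulVec x' j) ∧
        (∑ i, ρ i * q.1 i) - q.2 ≤ 0}) := ⟨q', hq'mem, rfl⟩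
  calc sInf _ ≤ (∑ i, |u i - q'.1 i|) + |η - q'.2| := csInf_le hbdd hmem'
    _ = ∑ i : Fin (n+1), |(Fin.snoc u η : Fin (n+1) → ℝ) i - v i| := hval
    _ ≤ H * ∑ t, max (∑ i, A t i * (Fin.snoc u η : Fin (n+1) → ℝ) i - c t) 0 := hvdist
    _ ≤ H * (K * T) := mul_le_mul_of_nonneg_left hres hH0
    _ ≤ (H * K + 1) * T := by nlinarith
end

section
/- For every w ∈ ℝ^n, the ℓ1-distance from w to the nonempty polyhedron P = {v ∈ ℝ^n : Av ≤ c} equals the optimal value of a dual linear program: inf_{v ∈ P} ‖w − v‖₁ = sup{⟨λ, Aw − c⟩ : λ ∈ ℝ^m, λ ≥ 0 componentwise, ‖Aᵀλ‖_∞ ≤ 1}. -/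
/-
Weak duality is the estimate `λ ⬝ (A w - c) ≤ λ ⬝ A (w - v) = (Aᵀ λ) ⬝ (w - v) ≤ ‖w - v‖₁` for
`v ∈ P`. For strong duality, take `d` below the infimum: the system `A v ≤ c`,
`σ ⬝ (w - v) ≤ d` (one inequality for every sign vector `σ`) has no solution, so Farkas' lemma
yields nonnegative multipliers. Nonemptiness of `P` forces the multipliers of the sign
inequalities to have positive total mass; normalising it to one makes `Aᵀ λ` a convex combination
of sign vectors, hence `‖Aᵀ λ‖_∞ ≤ 1`, with `λ ⬝ (A w - c) > d`.

Farkas' lemma itself comes from separating a point from a finitely generated cone, which is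
closed by the conic Carathéodory theorem.
-/

open Finset Matrix

section Caratheodory

variable {ι 𝕜 E : Type*} [Field 𝕜] [LinearOrder 𝕜] [IsStrictOrderedRing 𝕜]
  [AddCommGroup E] [Module 𝕜 E]

theorem exists_nonneg_sum_erase_eq_of_not_linearIndepOn [DecidableEq ι] {a : ι → E}
    {s : Finset ι} (hs : ¬ LinearIndepOn 𝕜 a s) {x : ι → 𝕜} (hx : ∀ i ∈ s, 0 ≤ x i) :
    ∃ j ∈ s, ∃ x' : ι → 𝕜, (∀ i ∈ s.erase j, 0 ≤ x' i) ∧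
      ∑ i ∈ s.erase j, x' i • a i = ∑ i ∈ s, x i • a i := by
  obtain ⟨g, hg, k, hk, hgk⟩ : ∃ g : ι → 𝕜, ∑ i ∈ s, g i • a i = 0 ∧ ∃ k ∈ s, 0 < g k := by
    obtain ⟨g, hg, k, hk, hgk⟩ := not_linearIndepOn_finset_iff.1 hs
    rcases hgk.lt_or_gt with hneg | hpos
    · exact ⟨-g, by simp [neg_smul, hg], k, hk, neg_pos.2 hneg⟩
    · exact ⟨g, hg, k, hk, hpos⟩
  -- Move from `x` along `-g` until the first coordinate hits zero.
  obtain ⟨j, hj, hmin⟩ := (s.filter (0 < g ·)).exists_min_image (fun i => x i / g i)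
    ⟨k, mem_filter.2 ⟨hk, hgk⟩⟩
  rw [mem_filter] at hj
  set t := x j / g j
  have ht : 0 ≤ t := div_nonneg (hx j hj.1) hj.2.le
  refine ⟨j, hj.1, fun i => x i - t * g i, fun i hi => ?_, ?_⟩
  · have hi := mem_of_mem_erase hi
    rcases le_or_gt (g i) 0 with hgi | hgi
    · nlinarith [hx i hi]
    · have := hmin i (mem_filter.2 ⟨hi, hgi⟩)
      rw [le_div_iff₀ hgi] at this
      linarith
  · rw [sum_erase _ (by simp [t, div_mul_cancel₀ _ hj.2.ne'])]
    simp [sub_smul, mul_smul, sum_sub_distrib, ← smul_sum, hg]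

theorem exists_linearIndepOn_nonneg_sum_eq (a : ι → E) (s : Finset ι) (x : ι → 𝕜)
    (hx : ∀ i ∈ s, 0 ≤ x i) :
    ∃ t ⊆ s, LinearIndepOn 𝕜 a t ∧ ∃ x' : ι → 𝕜, (∀ i ∈ t, 0 ≤ x' i) ∧
      ∑ i ∈ t, x' i • a i = ∑ i ∈ s, x i • a i := by
  classical
  induction s using Finset.strongInduction generalizing x with
  | H s ih =>
    by_cases hs : LinearIndepOn 𝕜 a s
    · exact ⟨s, subset_rfl, hs, x, hx, rfl⟩
    obtain ⟨j, hj, x', hx', hsum⟩ := exists_nonneg_sum_erase_eq_of_not_linearIndepOn hs hx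
    obtain ⟨t, hts, ht, x'', hx'', hsum'⟩ := ih _ (erase_ssubset hj) x' hx'
    exact ⟨t, hts.trans (erase_subset _ _), ht, x'', hx'', hsum'.trans hsum⟩

end Caratheodory

namespace PointedCone

variable {ι 𝕜 E : Type*} [Fintype ι] [AddCommGroup E]

theorem mem_hull_range_iff [Semiring 𝕜] [PartialOrder 𝕜] [IsOrderedRing 𝕜] [Module 𝕜 E]
    {a : ι → E} {y : E} :
    y ∈ hull 𝕜 (Set.range a) ↔ ∃ x : ι → 𝕜, 0 ≤ x ∧ ∑ i, x i • a i = y := by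
  rw [Submodule.mem_span_range_iff_exists_fun]
  constructor
  · rintro ⟨c, rfl⟩
    exact ⟨fun i => c i, fun i => (c i).2, rfl⟩
  · rintro ⟨x, hx, rfl⟩
    exact ⟨fun i => ⟨x i, hx i⟩, rfl⟩

variable [Module ℝ E] [TopologicalSpace E] [IsTopologicalAddGroup E] [ContinuousSMul ℝ E]
  [T2Space E]

theorem isClosed_hull_of_linearIndepOn {a : ι → E} {t : Finset ι} (ht : LinearIndepOn ℝ a t) :
    IsClosed (hull ℝ (a '' t) : Set E) := by
  have himage : (hull ℝ (a '' t) : Set E) =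
      Fintype.linearCombination ℝ (fun i : t => a i) '' {z | 0 ≤ z} := by
    ext y
    simp [Set.image_eq_range, mem_hull_range_iff, Fintype.linearCombination_apply]
  rw [himage]
  refine (LinearMap.isClosedEmbedding_of_injective ?_).isClosedMap _ isClosed_Ici
  exact LinearMap.ker_eq_bot.2 ht.fintypeLinearCombination_injective

theorem isClosed_hull_range (a : ι → E) : IsClosed (hull ℝ (Set.range a) : Set E) := by
  have hunion : (hull ℝ (Set.range a) : Set E) =
      ⋃ (t : Finset ι) (_ : LinearIndepOn ℝ a t), hull ℝ (a '' t) := by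
    ext y
    simp only [Set.mem_iUnion, SetLike.mem_coe, exists_prop]
    constructor
    · intro hy
      obtain ⟨x, hx, rfl⟩ := mem_hull_range_iff.1 hy
      obtain ⟨t, -, ht, x', hx', hsum⟩ :=
        exists_linearIndepOn_nonneg_sum_eq a univ x fun i _ => hx i
      refine ⟨t, ht, hsum ▸ Submodule.sum_mem _ fun i hi => ?_⟩
      exact smul_mem _ (hx' i hi) (subset_hull (Set.mem_image_of_mem a hi))
    · rintro ⟨t, -, hy⟩
      exact Submodule.span_mono (Set.image_subset_range a t) hy
  rw [hunion]
  exact isClosed_iUnion_of_finite fun t => isClosed_iUnion_of_finite isClosed_hull_of_linearIndepOn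

end PointedCone

namespace Matrix

variable {ι κ : Type*} [Fintype ι] [Fintype κ]

theorem exists_nonneg_vecMul_dotProduct_neg_of_not_exists_mulVec_eq (B : Matrix κ ι ℝ)
    (b : κ → ℝ) (hb : ¬ ∃ x, 0 ≤ x ∧ B *ᵥ x = b) : ∃ y, 0 ≤ y ᵥ* B ∧ y ⬝ᵥ b < 0 := by
  classical
  let C : ProperCone ℝ (κ → ℝ) :=
    { toSubmodule := PointedCone.hull ℝ (Set.range Bᵀ)
      isClosed' := PointedCone.isClosed_hull_range Bᵀ }
  have hbC : b ∉ C := fun hmem => hb <| by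
    obtain ⟨x, hx, hsum⟩ := PointedCone.mem_hull_range_iff.1 hmem
    exact ⟨x, hx, by simpa [mulVec_eq_sum, op_smul_eq_smul] using hsum⟩
  obtain ⟨f, hfC, hfb⟩ := C.hyperplane_separation_point hbC
  set y : κ → ℝ := fun k => f fun j => if k = j then 1 else 0
  have hf : ∀ z, f z = y ⬝ᵥ z := fun z => by
    rw [← ContinuousLinearMap.coe_coe, LinearMap.pi_apply_eq_sum_univ, dotProduct]
    simp [y, mul_comm]
  refine ⟨y, fun j => ?_, hf b ▸ hfb⟩
  have := hfC (Bᵀ j) (PointedCone.subset_hull ⟨j, rfl⟩)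
  rwa [hf] at this

theorem exists_nonneg_vecMul_eq_zero_dotProduct_neg_of_not_exists_mulVec_le (G : Matrix κ ι ℝ)
    (h : κ → ℝ) (hG : ¬ ∃ x, G *ᵥ x ≤ h) : ∃ y, 0 ≤ y ∧ y ᵥ* G = 0 ∧ y ⬝ᵥ h < 0 := by
  classical
  -- `G x ≤ h` is solvable iff `h = G x⁺ - G x⁻ + s` with `x⁺, x⁻, s ≥ 0`.
  obtain ⟨y, hy, hyh⟩ := exists_nonneg_vecMul_dotProduct_neg_of_not_exists_mulVec_eq
    (G.fromCols ((-G).fromCols (1 : Matrix κ κ ℝ))) h <| by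
      rintro ⟨x, hx, hxh⟩
      refine hG ⟨x ∘ Sum.inl - x ∘ Sum.inr ∘ Sum.inl, fun k => ?_⟩
      have hk := congrFun hxh k
      simp only [fromCols_mulVec, neg_mulVec, one_mulVec, Pi.add_apply, Pi.neg_apply,
        Function.comp_assoc] at hk
      have hs := hx (Sum.inr (Sum.inr k))
      simp only [mulVec_sub, Pi.sub_apply, Pi.zero_apply, Function.comp_apply] at hs hk ⊢
      linarith
  simp only [vecMul_fromCols, vecMul_one, vecMul_neg] at hy
  refine ⟨y, fun k => by simpa using hy (Sum.inr (Sum.inr k)), funext fun j => ?_, hyh⟩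
  exact le_antisymm (by simpa using hy (Sum.inr (Sum.inl j))) (hy (Sum.inl j))

variable (ι) in
def signVectors : Matrix (ι → SignType) ι ℝ := of fun σ j => σ j

theorem signVectors_mulVec_sign [DecidableEq ι] (u : ι → ℝ) :
    (signVectors ι *ᵥ u) (fun j => SignType.sign (u j)) = ∑ j, |u j| := by
  simp [signVectors, mulVec, dotProduct]

theorem abs_vecMul_signVectors_le [DecidableEq ι] {μ : (ι → SignType) → ℝ} (hμ : 0 ≤ μ) (j : ι) :
    |(μ ᵥ* signVectors ι) j| ≤ ∑ σ, μ σ := by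
  refine (abs_sum_le_sum_abs _ _).trans (sum_le_sum fun σ _ => ?_)
  rw [abs_mul, abs_of_nonneg (hμ σ)]
  exact mul_le_of_le_one_right (hμ σ) (by simp only [signVectors, of_apply]; cases σ j <;> simp)

theorem dotProduct_mulVec_sub_le (A : Matrix κ ι ℝ) {c : κ → ℝ} {v : ι → ℝ} (hv : A *ᵥ v ≤ c)
    {l : κ → ℝ} (hl : 0 ≤ l) (w : ι → ℝ) : l ⬝ᵥ (A *ᵥ w - c) ≤ (l ᵥ* A) ⬝ᵥ (w - v) := by
  calc l ⬝ᵥ (A *ᵥ w - c) ≤ l ⬝ᵥ (A *ᵥ w - A *ᵥ v) :=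
        dotProduct_le_dotProduct_of_nonneg_left (sub_le_sub_left hv _) hl
    _ = (l ᵥ* A) ⬝ᵥ (w - v) := by rw [← mulVec_sub, dotProduct_mulVec]

theorem dotProduct_mulVec_sub_le_sum_abs_sub (A : Matrix κ ι ℝ) {c : κ → ℝ} {v : ι → ℝ}
    (hv : A *ᵥ v ≤ c) {l : κ → ℝ} (hl : 0 ≤ l) (hAl : ∀ j, |(Aᵀ *ᵥ l) j| ≤ 1) (w : ι → ℝ) :
    l ⬝ᵥ (A *ᵥ w - c) ≤ ∑ j, |w j - v j| := by
  refine (dotProduct_mulVec_sub_le A hv hl w).trans (sum_le_sum fun j _ => ?_)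
  rw [← mulVec_transpose]
  calc (Aᵀ *ᵥ l) j * (w - v) j ≤ |(Aᵀ *ᵥ l) j| * |w j - v j| := by
        rw [← abs_mul]; exact le_abs_self _
    _ ≤ |w j - v j| := mul_le_of_le_one_left (abs_nonneg _) (hAl j)

theorem exists_dotProduct_mulVec_sub_gt (A : Matrix κ ι ℝ) {c : κ → ℝ}
    (hP : ∃ v, A *ᵥ v ≤ c) (w : ι → ℝ) {d : ℝ}
    (hd : ∀ v, A *ᵥ v ≤ c → d < ∑ j, |w j - v j|) :
    ∃ l, 0 ≤ l ∧ (∀ j, |(Aᵀ *ᵥ l) j| ≤ 1) ∧ d < l ⬝ᵥ (A *ᵥ w - c) := by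
  classical
  set S := signVectors ι
  -- `‖w - v‖₁ ≤ d` is the system of inequalities `σ ⬝ᵥ (w - v) ≤ d` over all sign vectors `σ`.
  obtain ⟨y, hy, hyG, hyh⟩ := exists_nonneg_vecMul_eq_zero_dotProduct_neg_of_not_exists_mulVec_le
    (A.fromRows (-S)) (Sum.elim c fun σ => d - (S *ᵥ w) σ) <| by
      rintro ⟨v, hv⟩
      rw [fromRows_mulVec] at hv
      have hσ := hv (Sum.inr fun j => SignType.sign (w j - v j))
      have hnorm := signVectors_mulVec_sign (w - v)
      simp only [Sum.elim_inr, neg_mulVec, Pi.neg_apply, mulVec_sub, Pi.sub_apply] at hσ hnorm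
      linarith [hd v fun i => hv (Sum.inl i)]
  set l := y ∘ Sum.inl
  set μ := y ∘ Sum.inr
  have hl : 0 ≤ l := fun i => hy _
  have hμ : 0 ≤ μ := fun σ => hy _
  have hlA : l ᵥ* A = μ ᵥ* S := by
    rwa [vecMul_fromRows, vecMul_neg, ← sub_eq_add_neg, sub_eq_zero] at hyG
  have hgap : (∑ σ, μ σ) * d < l ⬝ᵥ (A *ᵥ w - c) := by
    rw [← Sum.elim_comp_inl_inr y, sumElim_dotProduct_sumElim] at hyh
    have hμd : μ ⬝ᵥ (fun σ => d - (S *ᵥ w) σ) = (∑ σ, μ σ) * d - μ ⬝ᵥ (S *ᵥ w) := by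
      simp only [dotProduct, mul_sub, sum_sub_distrib, sum_mul]
    have hlw : l ⬝ᵥ (A *ᵥ w - c) = μ ⬝ᵥ (S *ᵥ w) - l ⬝ᵥ c := by
      rw [dotProduct_sub, dotProduct_mulVec, hlA, ← dotProduct_mulVec]
    linarith
  have hbound : ∀ j, |(l ᵥ* A) j| ≤ ∑ σ, μ σ := fun j => hlA ▸ abs_vecMul_signVectors_le hμ j
  rcases (sum_nonneg fun σ _ => hμ σ).eq_or_lt with hM | hM
  · obtain ⟨v, hv⟩ := hP
    have hlA0 : l ᵥ* A = 0 := funext fun j => abs_nonpos_iff.1 (hM ▸ hbound j)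
    have := dotProduct_mulVec_sub_le A hv hl w
    rw [hlA0, zero_dotProduct] at this
    rw [← hM, zero_mul] at hgap
    exact absurd hgap this.not_gt
  · refine ⟨(∑ σ, μ σ)⁻¹ • l, smul_nonneg (inv_nonneg.2 hM.le) hl, fun j => ?_, ?_⟩
    · rw [mulVec_transpose, smul_vecMul, Pi.smul_apply, smul_eq_mul, abs_mul, abs_inv,
        abs_of_pos hM, inv_mul_le_iff₀ hM, mul_one]
      exact hbound j
    · rwa [smul_dotProduct, smul_eq_mul, lt_inv_mul_iff₀ hM]

end Matrix

/-- Dual representation of the ℓ1-distance to a nonempty polyhedron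
`P = {v : A v ≤ c}`: for every `w`,
`inf_{v ∈ P} ‖w - v‖₁ = sup {⟨λ, A w - c⟩ : λ ≥ 0, ‖Aᵀ λ‖_∞ ≤ 1}`. -/
theorem l1_dist_to_polyhedron_dual (m n : ℕ)
    (A : Matrix (Fin m) (Fin n) ℝ) (c : Fin m → ℝ)
    (hP : ({v : Fin n → ℝ | ∀ i, A.mulVec v i ≤ c i}).Nonempty)
    (w : Fin n → ℝ) :
    sInf ((fun v : Fin n → ℝ => ∑ j, |w j - v j|) ''
        {v : Fin n → ℝ | ∀ i, A.mulVec v i ≤ c i})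
      = sSup {s : ℝ | ∃ l : Fin m → ℝ, (∀ i, 0 ≤ l i) ∧
          (∀ j, |A.transpose.mulVec l j| ≤ 1) ∧
          s = ∑ i, l i * (A.mulVec w i - c i)} := by
  have hbdd : BddBelow ((fun v : Fin n → ℝ => ∑ j, |w j - v j|) ''
      {v : Fin n → ℝ | ∀ i, A.mulVec v i ≤ c i}) :=
    ⟨0, by rintro _ ⟨v, -, rfl⟩; positivity⟩
  refine (csSup_eq_of_forall_le_of_forall_lt_exists_gt ?_ ?_ fun d hd => ?_).symm
  · exact ⟨0, 0, fun _ => le_rfl, by simp, by simp⟩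
  · rintro _ ⟨l, hl, hAl, rfl⟩
    refine le_csInf (hP.image _) ?_
    rintro _ ⟨v, hv, rfl⟩
    exact dotProduct_mulVec_sub_le_sum_abs_sub A hv hl hAl w
  · obtain ⟨l, hl, hAl, hdl⟩ := exists_dotProduct_mulVec_sub_gt A hP w
      fun v hv => hd.trans_le (csInf_le hbdd ⟨v, hv, rfl⟩)
    exact ⟨_, ⟨l, hl, hAl, rfl⟩, hdl⟩
end

section
/- Let D be a real m × n matrix and suppose the complete-recourse condition holds: for every r ∈ ℝ^m the set {u ∈ ℝ^n : u ≥ 0, Du ≤ r} is nonempty. Then for every ρ ∈ ℝ^n the dual feasible set Π(ρ) = {π ∈ ℝ^m : π ≤ 0, Dᵀπ ≤ ρ} is bounded. -/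
/-- Under complete recourse (the primal feasible set `{u ≥ 0 : D u ≤ r}` is
nonempty for every right-hand side `r`), the dual feasible set
`Π(ρ) = {π ≤ 0 : Dᵀ π ≤ ρ}` is bounded for every `ρ`. -/
theorem complete_recourse_dual_bounded (m n : ℕ) (D : Matrix (Fin m) (Fin n) ℝ)
    (hcr : ∀ r : Fin m → ℝ, ∃ u : Fin n → ℝ,
      (∀ i, 0 ≤ u i) ∧ ∀ j, D.mulVec u j ≤ r j) :
    ∀ ρ : Fin n → ℝ,
      Bornology.IsBounded {π : EuclideanSpace ℝ (Fin m) |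
        (∀ j, π j ≤ 0) ∧ ∀ i, D.transpose.mulVec π i ≤ ρ i} := by
  intro ρ
  obtain ⟨u, hu0, hDu⟩ := hcr (fun _ => -1)
  set C := ∑ i, ρ i * u i with hC
  apply Bornology.IsBounded.subset (Metric.isBounded_closedBall (x := (0 : EuclideanSpace ℝ (Fin m))) (r := C))
  rintro π ⟨hπ0, hπρ⟩
  -- key estimate: ∑ |π j| ≤ C
  have key : ∑ j, |π j| ≤ C := by
    have h1 : ∀ j, |π j| ≤ π j * D.mulVec u j := by
      intro j
      have := hDu j
      have hpj := hπ0 j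
      have : π j * D.mulVec u j ≥ π j * (-1) :=
        mul_le_mul_of_nonpos_left this hpj
      calc |π j| = π j * (-1) := by rw [abs_of_nonpos hpj]; ring
        _ ≤ π j * D.mulVec u j := this
    have h2 : ∑ j, |π j| ≤ ∑ j, π j * D.mulVec u j :=
      Finset.sum_le_sum fun j _ => h1 j
    have h3 : ∑ j, π j * D.mulVec u j = ∑ i, D.transpose.mulVec π i * u i := by
      simp only [Matrix.mulVec, dotProduct, Matrix.transpose_apply,
        Finset.mul_sum, Finset.sum_mul]
      rw [Finset.sum_comm]
      congr 1; ext i; congr 1; ext j; ring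
    have h4 : ∑ i, D.transpose.mulVec π i * u i ≤ ∑ i, ρ i * u i :=
      Finset.sum_le_sum fun i _ => mul_le_mul_of_nonneg_right (hπρ i) (hu0 i)
    calc ∑ j, |π j| ≤ _ := h2
      _ = _ := h3
      _ ≤ C := h4
  -- norm bound: ‖π‖ ≤ ∑ |π j|
  have hnorm : ‖π‖ ≤ ∑ j, |π j| := by
    rw [EuclideanSpace.norm_eq]
    rw [show ∑ j, |π j| = Real.sqrt ((∑ j, |π j|) ^ 2) from
      (Real.sqrt_sq (Finset.sum_nonneg fun j _ => abs_nonneg _)).symm]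
    apply Real.sqrt_le_sqrt
    have := Finset.sum_sq_le_sq_sum_of_nonneg (s := Finset.univ)
      (f := fun j => |π j|) (fun j _ => abs_nonneg _)
    simpa [sq_abs] using this
  simp only [Metric.mem_closedBall, dist_zero_right]
  exact hnorm.trans key
end

section
/- Let U be a set, (φ_k)_{k≥1} a sequence of functions φ_k : U → ℝ that is uniformly bounded and converges uniformly on U, let (û_n)_{n≥0} be a sequence of points of U, and let (k_n)_{n≥1} be a strictly increasing sequence of positive integers. Then lim_{m→∞} (1/m) Σ_{n=1}^m [φ_{k_n}(û_n) − φ_{k_n}(û_{n−1})] = 0. -/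
/-!
Write `φ_k = ψ + (φ_k − ψ)` with `ψ` the uniform limit. The `ψ`-part of the sum telescopes to
`ψ(û_m) − ψ(û_0)`, which is bounded because `ψ` inherits the uniform bound of the `φ_k`,
so it vanishes after division by `m`.
Since `k_n → ∞`, uniform convergence makes the remaining summands tend to `0`
whatever the points `û_n`, `û_{n−1}` are, and Cesàro averaging preserves this.
-/

open Filter Topology Finset Uniformity

theorem Finset.sum_Icc_one_eq_sum_range {M : Type*} [AddCommMonoid M] (f : ℕ → M) (m : ℕ) :
    ∑ n ∈ Icc 1 m, f n = ∑ n ∈ range m, f (n + 1) := by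
  rw [range_eq_Ico, sum_Ico_add' f 0 m 1, zero_add, Ico_add_one_right_eq_Icc]

theorem Finset.sum_Icc_one_sub_pred {G : Type*} [AddCommGroup G] (g : ℕ → G) (m : ℕ) :
    ∑ n ∈ Icc 1 m, (g n - g (n - 1)) = g m - g 0 := by
  rw [sum_Icc_one_eq_sum_range]
  exact sum_range_sub g m

theorem Filter.Tendsto.cesaro_Icc_one {e : ℕ → ℝ} {l : ℝ} (h : Tendsto e atTop (𝓝 l)) :
    Tendsto (fun m : ℕ => (∑ n ∈ Icc 1 m, e n) / m) atTop (𝓝 l) := by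
  simpa only [sum_Icc_one_eq_sum_range, div_eq_inv_mul, Function.comp_def] using
    (h.comp (tendsto_add_atTop_nat 1)).cesaro

theorem tendsto_div_natCast_of_abs_le {g : ℕ → ℝ} {C : ℝ} (hg : ∀ n, |g n| ≤ C) :
    Tendsto (fun m : ℕ => g m / m) atTop (𝓝 0) := by
  simpa only [div_eq_inv_mul] using
    (tendsto_inv_atTop_nhds_zero_nat (𝕜 := ℝ)).zero_mul_isBoundedUnder_le
      (isBoundedUnder_of ⟨C, fun n => (Real.norm_eq_abs _).trans_le (hg n)⟩)

theorem TendstoUniformly.tendsto_apply_sub_apply {ι κ α β : Type*} [SeminormedAddCommGroup β]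
    {F : ι → α → β} {f : α → β} {p : Filter ι} (h : TendstoUniformly F f p)
    {q : Filter κ} {g : κ → ι} (hg : Tendsto g q p) (x : κ → α) :
    Tendsto (fun j => F (g j) (x j) - f (x j)) q (𝓝 0) := by
  have hdiag : Tendsto (fun j => (f (x j), F (g j) (x j))) q (𝓤 β) :=
    (tendstoUniformly_iff_tendsto.1 h).comp (hg.prodMk tendsto_top)
  rw [tendsto_uniformity_iff_dist_tendsto_zero] at hdiag
  rw [tendsto_zero_iff_norm_tendsto_zero]
  simpa only [dist_comm, dist_eq_norm] using hdiag

theorem average_incumbent_decrease_tendsto_zero_general {U : Type*}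
    (φ : ℕ → U → ℝ)
    (hbdd : ∃ B : ℝ, ∀ k : ℕ, ∀ u : U, |φ k u| ≤ B)
    (hunif : ∃ ψ : U → ℝ, TendstoUniformly φ ψ atTop)
    (uhat : ℕ → U) (k : ℕ → ℕ) (hk : StrictMono k) :
    Tendsto (fun m : ℕ =>
        (∑ n ∈ Finset.Icc 1 m, (φ (k n) (uhat n) - φ (k n) (uhat (n - 1)))) / m)
      atTop (nhds 0) := by
  obtain ⟨B, hB⟩ := hbdd
  obtain ⟨ψ, hψ⟩ := hunif
  have hψB : ∀ u, |ψ u| ≤ B := fun u =>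
    le_of_tendsto' ((continuous_abs.tendsto _).comp (hψ.tendsto_at u)) (hB · u)
  have hk_top : Tendsto k atTop atTop := hk.tendsto_atTop
  have herr : Tendsto (fun n => (φ (k n) (uhat n) - ψ (uhat n))
      - (φ (k n) (uhat (n - 1)) - ψ (uhat (n - 1)))) atTop (𝓝 0) := by
    simpa only [sub_zero] using (hψ.tendsto_apply_sub_apply hk_top uhat).sub
      (hψ.tendsto_apply_sub_apply hk_top (fun n => uhat (n - 1)))
  have hsplit : ∀ m : ℕ, ∑ n ∈ Icc 1 m, (φ (k n) (uhat n) - φ (k n) (uhat (n - 1)))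
      = ∑ n ∈ Icc 1 m, ((φ (k n) (uhat n) - ψ (uhat n))
          - (φ (k n) (uhat (n - 1)) - ψ (uhat (n - 1))))
        + (ψ (uhat m) - ψ (uhat 0)) := fun m => by
    rw [← sum_Icc_one_sub_pred (fun n => ψ (uhat n)), ← sum_add_distrib]
    exact sum_congr rfl fun n _ => by ring
  simp_rw [hsplit, add_div]
  simpa only [add_zero] using herr.cesaro_Icc_one.add
    (tendsto_div_natCast_of_abs_le (C := B + B) fun m =>
      (abs_sub _ _).trans (add_le_add (hψB _) (hψB _)))

/-- Averaging/telescoping step (equation (diminishingError) in Theorem 4.2):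
if the functions `φ_k : U → ℝ` are uniformly bounded and converge uniformly on
`U`, `(û_n)` is any sequence in `U`, and `(k_n)` is a strictly increasing
sequence of positive integers, then
`(1/m) Σ_{n=1}^m [φ_{k_n}(û_n) − φ_{k_n}(û_{n−1})] → 0`. -/
theorem average_incumbent_decrease_tendsto_zero {U : Type*}
    (φ : ℕ → U → ℝ)
    (hbdd : ∃ B : ℝ, ∀ k : ℕ, ∀ u : U, |φ k u| ≤ B)
    (hunif : ∃ ψ : U → ℝ, TendstoUniformly φ ψ atTop)
    (uhat : ℕ → U) (k : ℕ → ℕ) (hk : StrictMono k) (hkpos : ∀ n, 0 < k n) :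
    Tendsto (fun m : ℕ =>
        (∑ n ∈ Finset.Icc 1 m, (φ (k n) (uhat n) - φ (k n) (uhat (n - 1)))) / m)
      atTop (nhds 0) :=
  average_incumbent_decrease_tendsto_zero_general φ hbdd hunif uhat k hk
end
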